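/- Let A and B be terms and ρ₁, ρ₂ renamings such that dom(ρ₁) = dom(ρ₂) ⊇ vars(B), rang(ρ₁) ∩ vars(A) = ∅ and rang(ρ₂) ∩ vars(A) = ∅. Then A and Bρ₁ unify if and only if A and Bρ₂ unify. -/

import Mathlib

open scoped Classical

/-- First-order terms over a set `F` of function symbols, with variables drawn from `ℕ`. -/
inductive Tm (F : Type) : Type
  | var : ℕ → Tm F
  | app : F → List (Tm F) → Tm F

namespace Tm

/-- Applying a substitution (a map from variables to terms) to a term. -/
def subst {F : Type} : Tm F → (ℕ → Tm F) → Tm F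
  | var x, θ => θ x
  | app f ts, θ => app f (ts.attach.map fun t => t.1.subst θ)
  decreasing_by
    have := List.sizeOf_lt_of_mem t.2
    simp only [Tm.app.sizeOf_spec]
    omega

/-- The set of variables occurring in a term. -/
def vars {F : Type} : Tm F → Set ℕ
  | var x => {x}
  | app _ ts => ⋃ t : {x // x ∈ ts}, t.1.vars
  decreasing_by
    have := List.sizeOf_lt_of_mem t.2
    simp only [Tm.app.sizeOf_spec]
    omega

/-- A term is ground if it contains no variables. -/
def Ground {F : Type} (t : Tm F) : Prop := t.vars = ∅

end Tm

/-- Substitutions are maps from variables to terms (finite support is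
    imposed separately by `Subst.IsSubst`). -/
abbrev Subst (F : Type) := ℕ → Tm F

namespace Subst

variable {F : Type}

/-- The domain of a substitution. -/
def dom (θ : Subst F) : Set ℕ := {x | θ x ≠ Tm.var x}

/-- A genuine substitution is the identity on all but finitely many variables. -/
def IsSubst (θ : Subst F) : Prop := (dom θ).Finite

/-- The range variables of a substitution. -/
def rang (θ : Subst F) : Set ℕ := ⋃ x ∈ dom θ, (θ x).vars

/-- vars(θ) = dom(θ) ∪ rang(θ). -/
def svars (θ : Subst F) : Set ℕ := dom θ ∪ rang θ

/-- Composition: `X (comp θ σ) = (X θ) σ`. -/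
def comp (θ σ : Subst F) : Subst F := fun x => (θ x).subst σ

/-- Restriction of a substitution to a set of variables. -/
noncomputable def restrict (θ : Subst F) (V : Set ℕ) : Subst F :=
  fun x => if x ∈ V then θ x else Tm.var x

/-- A renaming is a substitution mapping its domain injectively to variables. -/
def IsRenaming (ρ : Subst F) : Prop :=
  IsSubst ρ ∧ (∀ x, ∃ y, ρ x = Tm.var y) ∧ Set.InjOn ρ (dom ρ)

/-- Two substitutions are equivalent modulo renaming. -/
def EquivMod (σ θ : Subst F) : Prop :=
  ∃ δ ρ, IsRenaming δ ∧ IsRenaming ρ ∧ σ = comp θ δ ∧ θ = comp σ ρ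

/-- `μ` is a unifier of the terms `s` and `t`. -/
def Unifier (μ : Subst F) (s t : Tm F) : Prop :=
  IsSubst μ ∧ s.subst μ = t.subst μ

/-- Two terms unify if they have a unifier. -/
def Unify (s t : Tm F) : Prop := ∃ μ, Unifier μ s t

/-- `μ` is a most general unifier of the terms `s` and `t`. -/
def IsMGU (μ : Subst F) (s t : Tm F) : Prop :=
  Unifier μ s t ∧ ∀ τ, Unifier τ s t → ∃ δ, IsSubst δ ∧ τ = comp μ δ

/-- The image of a set of variables under a renaming: `Vρ = {Xρ | X ∈ V}`. -/
def varImage (ρ : Subst F) (V : Set ℕ) : Set ℕ := {y | ∃ x ∈ V, ρ x = Tm.var y}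

/-- The substitution `φρ`, whose bindings are `{Xρ ↦ tρ | X ↦ t a binding of φ}`. -/
noncomputable def renameSubst (φ ρ : Subst F) : Subst F := fun y =>
  if h : ∃ x, x ∈ dom φ ∧ ρ x = Tm.var y then (φ h.choose).subst ρ else Tm.var y

/-- `μ` is a unifier of a set of equations (pairs of terms). -/
def EqUnifier (μ : Subst F) (E : Set (Tm F × Tm F)) : Prop :=
  IsSubst μ ∧ ∀ e ∈ E, e.1.subst μ = e.2.subst μ

/-- `μ` is a most general unifier of a set of equations. -/
def EqIsMGU (μ : Subst F) (E : Set (Tm F × Tm F)) : Prop :=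
  EqUnifier μ E ∧ ∀ τ, EqUnifier τ E → ∃ δ, IsSubst δ ∧ τ = comp μ δ

/-- Applying a substitution to a set of equations. -/
def eqSubst (E : Set (Tm F × Tm F)) (θ : Subst F) : Set (Tm F × Tm F) :=
  (fun e => (e.1.subst θ, e.2.subst θ)) '' E

/-- `downwards(E, S) = S ∪ ⋃ {vars(t) | (X = t) ∈ E with X ∈ S}`. -/
def downwards (E : Set (Tm F × Tm F)) (S : Set ℕ) : Set ℕ :=
  S ∪ {y | ∃ x t, (Tm.var x, t) ∈ E ∧ x ∈ S ∧ y ∈ Tm.vars t}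

/-- `upwards(E, S) = S ∪ {X | (X = t) ∈ E and vars(t) ⊆ S}`. -/
def upwards (E : Set (Tm F × Tm F)) (S : Set ℕ) : Set ℕ :=
  S ∪ {x | ∃ t, (Tm.var x, t) ∈ E ∧ Tm.vars t ⊆ S}

end Subst

/-! A unifier `μ` of `A` and `Bθ` yields a unifier `ν` of `A` and `Bρ` for any renaming `ρ` of the
variables of `B` apart from `A`: since `ρ` is injective on its domain, we may set `(Xρ)ν := (Xθ)μ`
on the fresh variables and `ν := μ` elsewhere, and `ν` agrees with `μ` on `A`. Applying this in both
directions with `θ` the other renaming gives the theorem. -/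

namespace Tm

variable {F : Type}

theorem vars_var (x : ℕ) : (var x : Tm F).vars = {x} := by
  rw [vars]

theorem subst_var (x : ℕ) (θ : Subst F) : (var x).subst θ = θ x := by
  rw [subst]

theorem subst_app (f : F) (ts : List (Tm F)) (θ : Subst F) :
    (app f ts).subst θ = app f (ts.map (·.subst θ)) := by
  rw [subst, List.attach_map_val (l := ts) (f := fun t => t.subst θ)]

theorem subst_congr : ∀ (t : Tm F) {θ σ : Subst F}, (∀ x ∈ t.vars, θ x = σ x) →
    t.subst θ = t.subst σ
  | var x, θ, σ, h => by
      rw [subst_var, subst_var]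
      exact h x (vars_var x ▸ Set.mem_singleton x)
  | app f ts, θ, σ, h => by
      rw [subst_app, subst_app]
      congr 1
      refine List.map_congr_left fun t ht => ?_
      refine subst_congr t fun x hx => h x ?_
      rw [vars]
      exact Set.mem_iUnion.2 ⟨⟨t, ht⟩, hx⟩
  decreasing_by
    have := List.sizeOf_lt_of_mem ht
    simp only [Tm.app.sizeOf_spec]
    omega

theorem subst_subst : ∀ (t : Tm F) (θ σ : Subst F), (t.subst θ).subst σ = t.subst (Subst.comp θ σ)
  | var x, θ, σ => by rw [subst_var, subst_var]; rfl
  | app f ts, θ, σ => by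
      rw [subst_app, subst_app, subst_app, List.map_map]
      congr 1
      exact List.map_congr_left fun t _ => subst_subst t θ σ
  decreasing_by
    have := List.sizeOf_lt_of_mem ‹t ∈ ts›
    simp only [Tm.app.sizeOf_spec]
    omega

end Tm

namespace Subst

variable {F : Type}

theorem mem_rang_of_eq_var {ρ : Subst F} {x y : ℕ} (hx : x ∈ dom ρ) (hxy : ρ x = Tm.var y) :
    y ∈ rang ρ :=
  Set.mem_biUnion hx (by rw [hxy, Tm.vars_var]; rfl)

theorem IsRenaming.rang_finite {ρ : Subst F} (hρ : IsRenaming ρ) : (rang ρ).Finite :=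
  hρ.1.biUnion fun x _ => by
    obtain ⟨y, hy⟩ := hρ.2.1 x
    rw [hy, Tm.vars_var]
    exact Set.finite_singleton y

/-- The substitution sending `Xρ` to `Xθ` for `X ∈ dom ρ` and agreeing with `μ` elsewhere. -/
noncomputable def extendAlong (ρ θ μ : Subst F) : Subst F := fun y =>
  Function.extend ((dom ρ).domRestrict ρ) ((dom ρ).domRestrict θ) (·.subst μ) (Tm.var y)

theorem IsRenaming.subst_extendAlong {ρ : Subst F} (hρ : IsRenaming ρ) (θ μ : Subst F)
    {x : ℕ} (hx : x ∈ dom ρ) : (ρ x).subst (extendAlong ρ θ μ) = θ x := by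
  obtain ⟨y, hy⟩ := hρ.2.1 x
  rw [hy, Tm.subst_var, extendAlong, ← hy]
  exact (Set.injOn_iff_injective.1 hρ.2.2).extend_apply _ _ ⟨x, hx⟩

theorem extendAlong_apply_of_notMem_rang {ρ : Subst F} (θ μ : Subst F) {y : ℕ} (hy : y ∉ rang ρ) :
    extendAlong ρ θ μ y = μ y := by
  rw [extendAlong, Function.extend_apply', Tm.subst_var]
  exact fun ⟨x, hxy⟩ => hy (mem_rang_of_eq_var x.2 hxy)

theorem IsRenaming.isSubst_extendAlong {ρ : Subst F} (hρ : IsRenaming ρ) (θ : Subst F)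
    {μ : Subst F} (hμ : IsSubst μ) : IsSubst (extendAlong ρ θ μ) := by
  refine (hμ.union hρ.rang_finite).subset fun y hy => ?_
  by_cases hy' : y ∈ rang ρ
  · exact Or.inr hy'
  · left
    rwa [dom, Set.mem_ofPred_eq, ← extendAlong_apply_of_notMem_rang θ μ hy']

theorem unify_subst_of_isRenaming {A B : Tm F} {θ ρ : Subst F} (hθ : Unify A (B.subst θ))
    (hρ : IsRenaming ρ) (hB : B.vars ⊆ dom ρ) (hA : rang ρ ∩ A.vars = ∅) :
    Unify A (B.subst ρ) := by
  obtain ⟨μ, hμ, hAB⟩ := hθ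
  refine ⟨extendAlong ρ (comp θ μ) μ, hρ.isSubst_extendAlong _ hμ, ?_⟩
  have hA' : A.subst (extendAlong ρ (comp θ μ) μ) = A.subst μ :=
    A.subst_congr fun y hy =>
      extendAlong_apply_of_notMem_rang _ _ fun hy' => hA.subset ⟨hy', hy⟩
  have hB' : (B.subst ρ).subst (extendAlong ρ (comp θ μ) μ) = (B.subst θ).subst μ := by
    rw [Tm.subst_subst, Tm.subst_subst]
    exact B.subst_congr fun x hx => hρ.subst_extendAlong _ _ (hB hx)
  rw [hA', hB', hAB]

end Subst

/-- with `dom(ρ₁) = dom(ρ₂) ⊇ vars(B)` and ranges of `ρ₁`, `ρ₂`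
disjoint from `vars(A)`, `A` and `Bρ₁` unify iff `A` and `Bρ₂` unify. -/
theorem stmt2 {F : Type} (A B : Tm F) (ρ₁ ρ₂ : Subst F)
    (h₁ : Subst.IsRenaming ρ₁) (h₂ : Subst.IsRenaming ρ₂)
    (hdom : Subst.dom ρ₁ = Subst.dom ρ₂)
    (hB : B.vars ⊆ Subst.dom ρ₁)
    (hr₁ : Subst.rang ρ₁ ∩ A.vars = ∅)
    (hr₂ : Subst.rang ρ₂ ∩ A.vars = ∅) :
    Subst.Unify A (B.subst ρ₁) ↔ Subst.Unify A (B.subst ρ₂) :=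
  ⟨fun h => Subst.unify_subst_of_isRenaming h h₂ (hdom ▸ hB) hr₂,
   fun h => Subst.unify_subst_of_isRenaming h h₁ hB hr₁⟩
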